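/- arXiv:2412.00240 — 5 statements merged into one kernel-verified Lean document; each statement's English description precedes it below -/
import Mathlib

section
/- Let α ∈ (0,1] and t > 0. If f and g are α-differentiable at t, then the product fg is α-differentiable at t and T^α(fg)(t) = g(t)·T^α f(t) + f(t)·T^α g(t). -/
open Filter Topology

/-- `f` is α-differentiable at `t` with conformable fractional derivative `L`:
`lim_{δ→0} (f (t + δ t^{1-α}) - f t)/δ = L`. -/
def HasConformableDerivAt (α : ℝ) (f : ℝ → ℝ) (L : ℝ) (t : ℝ) : Prop :=
  Tendsto (fun δ : ℝ => (f (t + δ * t ^ (1 - α)) - f t) / δ) (𝓝[≠] (0 : ℝ)) (𝓝 L)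

/-!
Along the curve `δ ↦ t + δ t^{1-α}` the conformable derivative is an ordinary difference
quotient at `δ = 0`, so the product rule is the usual one: a convergent difference quotient forces
continuity at `0`, and `(u v - a b)/δ = u · (v - b)/δ + b · (u - a)/δ`.
-/

section DifferenceQuotient

variable {𝕜 : Type*} [NormedField 𝕜] {u v : 𝕜 → 𝕜} {a b L M : 𝕜}

theorem tendsto_of_tendsto_sub_div
    (hu : Tendsto (fun δ => (u δ - a) / δ) (𝓝[≠] 0) (𝓝 L)) :
    Tendsto u (𝓝[≠] 0) (𝓝 a) := by
  have hδ : Tendsto (fun δ : 𝕜 => δ) (𝓝[≠] 0) (𝓝 0) := tendsto_nhdsWithin_of_tendsto_nhds tendsto_id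
  have hsub : Tendsto (fun δ => u δ - a) (𝓝[≠] 0) (𝓝 0) := by
    refine (mul_zero L ▸ hu.mul hδ).congr' ?_
    filter_upwards [self_mem_nhdsWithin] with δ (hδ0 : δ ≠ 0)
    exact div_mul_cancel₀ _ hδ0
  simpa using hsub.add_const a

theorem tendsto_mul_sub_div
    (hu : Tendsto (fun δ => (u δ - a) / δ) (𝓝[≠] 0) (𝓝 L))
    (hv : Tendsto (fun δ => (v δ - b) / δ) (𝓝[≠] 0) (𝓝 M)) :
    Tendsto (fun δ => (u δ * v δ - a * b) / δ) (𝓝[≠] 0) (𝓝 (b * L + a * M)) := by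
  have hsplit : (fun δ => (u δ * v δ - a * b) / δ) =
      fun δ => b * ((u δ - a) / δ) + u δ * ((v δ - b) / δ) := by
    funext δ
    ring
  rw [hsplit]
  exact (hu.const_mul b).add ((tendsto_of_tendsto_sub_div hu).mul hv)

end DifferenceQuotient

theorem conformable_deriv_mul_general (α t : ℝ)
    (f g : ℝ → ℝ) (L M : ℝ)
    (hf : HasConformableDerivAt α f L t) (hg : HasConformableDerivAt α g M t) :
    HasConformableDerivAt α (fun x => f x * g x) (g t * L + f t * M) t :=
  tendsto_mul_sub_div hf hg

theorem conformable_deriv_mul (α t : ℝ) (hα : α ∈ Set.Ioc (0 : ℝ) 1)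
    (ht : 0 < t) (f g : ℝ → ℝ) (L M : ℝ)
    (hf : HasConformableDerivAt α f L t) (hg : HasConformableDerivAt α g M t) :
    HasConformableDerivAt α (fun x => f x * g x) (g t * L + f t * M) t :=
  conformable_deriv_mul_general α t f g L M hf hg
end

section
/- Chain rule for the conformable fractional derivative: let α ∈ (0,1] and x > 0, let v : (0,∞) → ℝ be differentiable at x with v(x) > 0, and let f : (0,∞) → ℝ be differentiable at v(x). Then f ∘ v is α-differentiable at x and T^α(f ∘ v)(x) = (T^α f)(v(x)) · v(x)^{α−1} · (T^α v)(x), where (T^α f)(v(x)) denotes the conformable fractional derivative of f evaluated at the point v(x). -/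
/-!
At a point of ordinary differentiability the conformable derivative is just `x ^ (1 - α) * g'`:
`δ ↦ g (x + δ x^{1-α})` has derivative `x^{1-α} g'` at `0`, and its slope at `0` is the conformable
difference quotient. The chain rule is therefore the ordinary one, once the factors
`(v x)^{1-α}` and `(v x)^{α-1}` cancel.
-/

open Filter Topology

theorem HasDerivAt.hasConformableDerivAt {g : ℝ → ℝ} {g' x : ℝ} (hg : HasDerivAt g g' x)
    (α : ℝ) : HasConformableDerivAt α g (x ^ (1 - α) * g') x := by
  set c := x ^ (1 - α)
  have hline : HasDerivAt (fun δ : ℝ => x + δ * c) c 0 := by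
    simpa using ((hasDerivAt_id (0 : ℝ)).mul_const c).const_add x
  have hcomp : HasDerivAt (fun δ : ℝ => g (x + δ * c)) (g' * c) 0 :=
    hg.comp_of_eq 0 hline (by simp)
  have hslope := hasDerivAt_iff_tendsto_slope.mp hcomp
  rw [mul_comm]
  refine hslope.congr fun δ => ?_
  simp [slope_def_field, c]

-- Positivity matters: for `y < 0` the product is `cos ((1 - α) π) ^ 2`.
theorem rpow_one_sub_mul_rpow_sub_one {y : ℝ} (hy : 0 < y) (α : ℝ) :
    y ^ (1 - α) * y ^ (α - 1) = 1 := by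
  rw [← Real.rpow_add hy]
  simp

theorem conformable_deriv_chain_rule_general (α x : ℝ)
    (v f : ℝ → ℝ) (v' f' : ℝ)
    (hv : HasDerivAt v v' x) (hvx : 0 < v x) (hf : HasDerivAt f f' (v x)) :
    HasConformableDerivAt α (f ∘ v)
      (((v x) ^ (1 - α) * f') * (v x) ^ (α - 1) * (x ^ (1 - α) * v')) x := by
  have hL : ((v x) ^ (1 - α) * f') * (v x) ^ (α - 1) * (x ^ (1 - α) * v')
      = x ^ (1 - α) * (f' * v') := by
    linear_combination (f' * (x ^ (1 - α) * v')) * rpow_one_sub_mul_rpow_sub_one hvx α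
  rw [hL]
  exact (hf.comp x hv).hasConformableDerivAt α

/-- Chain rule: `T^α (f ∘ v) (x) = (T^α f)(v x) · (v x)^{α-1} · (T^α v)(x)`,
where `(T^α f)(v x) = (v x)^{1-α} f'(v x)` and `(T^α v)(x) = x^{1-α} v'(x)`. -/
theorem conformable_deriv_chain_rule (α x : ℝ) (hα : α ∈ Set.Ioc (0 : ℝ) 1)
    (hx : 0 < x) (v f : ℝ → ℝ) (v' f' : ℝ)
    (hv : HasDerivAt v v' x) (hvx : 0 < v x) (hf : HasDerivAt f f' (v x)) :
    HasConformableDerivAt α (f ∘ v)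
      (((v x) ^ (1 - α) * f') * (v x) ^ (α - 1) * (x ^ (1 - α) * v')) x :=
  conformable_deriv_chain_rule_general α x v f v' f' hv hvx hf
end

section
/- Let α ∈ (0,1], a ≥ 0, and let f be continuous on [a,∞). Then for every t > a, the function I^α_a f is α-differentiable at t and T^α(I^α_a f)(t) = f(t). -/
open Filter Topology

-- The conformable difference quotient is the slope at `0` of `δ ↦ f (t + δ t^{1-α})`.
theorem HasDerivAt.hasConformableDerivAt_s6 {f : ℝ → ℝ} {f' t : ℝ} (α : ℝ)
    (hf : HasDerivAt f f' t) : HasConformableDerivAt α f (f' * t ^ (1 - α)) t := by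
  set c := t ^ (1 - α)
  have hline : HasDerivAt (fun δ : ℝ => t + δ * c) c 0 := by
    simpa using ((hasDerivAt_id (0 : ℝ)).mul_const c).const_add t
  have hcomp : HasDerivAt (fun δ : ℝ => f (t + δ * c)) (f' * c) 0 :=
    (by simpa using hf : HasDerivAt f f' (t + 0 * c)).comp 0 hline
  refine (hasDerivAt_iff_tendsto_slope.mp hcomp).congr' ?_
  filter_upwards with δ
  simp [slope_def_field, c]

theorem hasDerivAt_integral_rpow_mul {f : ℝ → ℝ} {r a t : ℝ} (hr : -1 < r) (ha : 0 ≤ a)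
    (hat : a < t) (hf : ContinuousOn f (Set.Ici a)) :
    HasDerivAt (fun s => ∫ x in a..s, x ^ r * f x) (t ^ r * f t) t := by
  have hcont : ContinuousOn (fun x : ℝ => x ^ r * f x) (Set.Ioi a) :=
    (continuousOn_id.rpow_const fun x hx => .inl (ha.trans_lt hx).ne').mul
      (hf.mono Set.Ioi_subset_Ici_self)
  have hint : IntervalIntegrable (fun x : ℝ => x ^ r * f x) MeasureTheory.volume a t := by
    simpa only [mul_comm] using (intervalIntegral.intervalIntegrable_rpow' hr).continuousOn_mul
      (hf.mono (by simp [Set.uIcc_of_le hat.le, Set.Icc_subset_Ici_self]))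
  exact intervalIntegral.integral_hasDerivAt_right hint
    (hcont.stronglyMeasurableAtFilter isOpen_Ioi t hat) (hcont.continuousAt (Ioi_mem_nhds hat))

/-- The α-fractional integral `I^α_a f (t) = ∫_a^t x^{α-1} f(x) dx` is an
antiderivative in the conformable sense: `T^α (I^α_a f)(t) = f(t)`. -/
theorem conformable_deriv_fractional_integral (α a t : ℝ) (hα : α ∈ Set.Ioc (0 : ℝ) 1)
    (ha : 0 ≤ a) (hat : a < t) (f : ℝ → ℝ) (hf : ContinuousOn f (Set.Ici a)) :
    HasConformableDerivAt α (fun s => ∫ x in a..s, x ^ (α - 1) * f x) (f t) t := by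
  have ht : 0 < t := ha.trans_lt hat
  have hderiv := (hasDerivAt_integral_rpow_mul (r := α - 1) (by linarith [hα.1]) ha hat
    hf).hasConformableDerivAt_s6 α
  have hcancel : t ^ (α - 1) * t ^ (1 - α) = 1 := by
    rw [← Real.rpow_add ht, sub_add_sub_cancel', sub_self, Real.rpow_zero]
  rwa [mul_right_comm, hcancel, one_mul] at hderiv
end

section
/- Conformable Green's first identity (vanishing boundary term): let α ∈ (0,1], let Ω ⊆ (0,∞)^n be open, let u : Ω → ℝ be twice continuously differentiable, and let v : Ω → ℝ be continuously differentiable with compact support in Ω. Then ∫_Ω ( ∑_{k=1}^n D^α_{x_k} u · D^α_{x_k} v + v · ∑_{k=1}^n D^α_{x_k}(D^α_{x_k} u) ) d_α x = 0. -/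
open Filter Topology MeasureTheory

/-!
Write `D_k = x_k^{1-α} ∂_k` and `w = ∏_j x_j^{α-1}`. The `k`-th summand of the integrand is
`∂_k F_k` for the flux `F_k = v · D_k u · ∏_{j ≠ k} x_j^{α-1}`: the weight `x_k^{1-α}` of the
conformable derivative cancels against the factor `x_k^{α-1}` of `w`, and the remaining factor
does not depend on `x_k`. Each `F_k` is `C¹` with compact support inside `Ω` (because `v` is), so
the integral of its partial derivative over `ℝⁿ` vanishes.
-/

/-- The conformable partial derivative of order `α` in the `k`-th coordinate:
`D^α_{x_k} f (x) = x_k^{1-α} ∂f/∂x_k (x)`. -/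
noncomputable def confPDeriv (α : ℝ) {n : ℕ} (f : (Fin n → ℝ) → ℝ) (k : Fin n)
    (x : Fin n → ℝ) : ℝ :=
  (x k) ^ (1 - α) * deriv (fun t : ℝ => f (Function.update x k t)) (x k)

open Finset Function

theorem ContDiffOn.contDiff_of_tsupport_subset {𝕜 E F : Type*} [NontriviallyNormedField 𝕜]
    [NormedAddCommGroup E] [NormedSpace 𝕜 E] [NormedAddCommGroup F] [NormedSpace 𝕜 F]
    {m : WithTop ℕ∞} {f : E → F} {Ω : Set E} (hf : ContDiffOn 𝕜 m f Ω) (hΩ : IsOpen Ω)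
    (hsupp : tsupport f ⊆ Ω) : ContDiff 𝕜 m f := by
  refine contDiff_iff_contDiffAt.2 fun x => ?_
  by_cases hx : x ∈ Ω
  · exact hf.contDiffAt (hΩ.mem_nhds hx)
  · exact contDiffAt_const.congr_of_eventuallyEq
      (notMem_tsupport_iff_eventuallyEq.1 fun h => hx (hsupp h))

theorem ContDiff.integrable_fderiv_apply {E : Type*} [NormedAddCommGroup E] [NormedSpace ℝ E]
    [MeasurableSpace E] [OpensMeasurableSpace E] (μ : Measure E) [IsFiniteMeasureOnCompacts μ]
    {f : E → ℝ} (hf : ContDiff ℝ 1 f) (hfc : HasCompactSupport f) (w : E) :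
    Integrable (fun x => fderiv ℝ f x w) μ :=
  ((hf.continuous_fderiv one_ne_zero).clm_apply continuous_const).integrable_of_hasCompactSupport
    (hfc.fderiv_apply ℝ w)

theorem integral_fderiv_apply_eq_zero {E : Type*} [NormedAddCommGroup E] [NormedSpace ℝ E]
    [FiniteDimensional ℝ E] [MeasurableSpace E] [BorelSpace E] (μ : Measure E)
    [μ.IsAddHaarMeasure] {f : E → ℝ} (hf : ContDiff ℝ 1 f) (hfc : HasCompactSupport f) (w : E) :
    ∫ x, fderiv ℝ f x w ∂μ = 0 := by
  have key := integral_mul_fderiv_eq_neg_fderiv_mul_of_integrable (μ := μ) (g := fun _ => (1 : ℝ))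
    (v := w) (by simpa using hf.integrable_fderiv_apply μ hfc w) (by simp)
    (by simpa using hf.continuous.integrable_of_hasCompactSupport hfc)
    (fun x _ => hf.differentiable one_ne_zero x) (fun _ _ => differentiableAt_const _)
  simpa using key.symm

variable {n : ℕ}

theorem hasDerivAt_comp_update {f : (Fin n → ℝ) → ℝ} {φ : (Fin n → ℝ) →L[ℝ] ℝ}
    {x : Fin n → ℝ} (k : Fin n) (hf : HasFDerivAt f φ x) :
    HasDerivAt (fun t => f (update x k t)) (φ (Pi.single k 1)) (x k) := by
  rw [← update_eq_self k x] at hf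
  exact hf.comp_hasDerivAt (x k) (hasDerivAt_update x k (x k))

theorem DifferentiableAt.comp_update {f : (Fin n → ℝ) → ℝ} {x : Fin n → ℝ} (k : Fin n)
    (hf : DifferentiableAt ℝ f x) :
    DifferentiableAt ℝ (fun t => f (update x k t)) (x k) :=
  (hasDerivAt_comp_update k hf.hasFDerivAt).differentiableAt

theorem deriv_comp_update {f : (Fin n → ℝ) → ℝ} {x : Fin n → ℝ} (k : Fin n)
    (hf : DifferentiableAt ℝ f x) :
    deriv (fun t => f (update x k t)) (x k) = fderiv ℝ f x (Pi.single k 1) :=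
  (hasDerivAt_comp_update k hf.hasFDerivAt).deriv

theorem contDiffOn_confPDeriv (α : ℝ) {m : WithTop ℕ∞} {u : (Fin n → ℝ) → ℝ}
    {Ω : Set (Fin n → ℝ)} (k : Fin n) (hΩ : IsOpen Ω) (hΩk : ∀ y ∈ Ω, y k ≠ 0)
    (hu : ContDiffOn ℝ (m + 1) u Ω) :
    ContDiffOn ℝ m (confPDeriv α u k) Ω := by
  have hcoord : ContDiffOn ℝ m (fun y : Fin n → ℝ => y k ^ (1 - α)) Ω :=
    (contDiff_apply ℝ ℝ k).contDiffOn.rpow_const_of_ne hΩk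
  have hpartial : ContDiffOn ℝ m (fun y => fderiv ℝ u y (Pi.single k 1)) Ω :=
    (hu.fderiv_of_isOpen hΩ le_rfl).clm_apply contDiffOn_const
  refine (hcoord.mul hpartial).congr fun y hy => ?_
  have hud : DifferentiableAt ℝ u y :=
    (hu.differentiableOn (by simp) y hy).differentiableAt (hΩ.mem_nhds hy)
  rw [confPDeriv, deriv_comp_update k hud]

theorem deriv_comp_update_mul_mul_prod_erase (α : ℝ) {v g : (Fin n → ℝ) → ℝ}
    {x : Fin n → ℝ} (k : Fin n) (hxk : 0 < x k)
    (hv : DifferentiableAt ℝ v x) (hg : DifferentiableAt ℝ g x) :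
    deriv (fun t => v (update x k t) * g (update x k t) *
        ∏ j ∈ univ.erase k, update x k t j ^ (α - 1)) (x k)
      = (g x * confPDeriv α v k x + v x * confPDeriv α g k x) * ∏ j, x j ^ (α - 1) := by
  set C := ∏ j ∈ univ.erase k, x j ^ (α - 1)
  have hC : ∀ t, ∏ j ∈ univ.erase k, update x k t j ^ (α - 1) = C := fun t =>
    prod_congr rfl fun j hj => by rw [update_of_ne (ne_of_mem_erase hj)]
  have hweight : x k ^ (1 - α) * x k ^ (α - 1) = 1 := by
    rw [← Real.rpow_add hxk]
    norm_num
  simp only [hC]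
  have hprod := ((hv.comp_update k).hasDerivAt.fun_mul (hg.comp_update k).hasDerivAt).mul_const C
  rw [hprod.deriv, ← mul_prod_erase univ _ (mem_univ k), confPDeriv, confPDeriv]
  simp only [update_eq_self]
  set dv := deriv (fun t => v (update x k t)) (x k)
  set dg := deriv (fun t => g (update x k t)) (x k)
  linear_combination -((dv * g x + v x * dg) * C) * hweight

noncomputable def confFlux (α : ℝ) (u v : (Fin n → ℝ) → ℝ) (k : Fin n) (y : Fin n → ℝ) : ℝ :=
  v y * confPDeriv α u k y * ∏ j ∈ univ.erase k, y j ^ (α - 1)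

theorem hasCompactSupport_confFlux (α : ℝ) (u : (Fin n → ℝ) → ℝ) {v : (Fin n → ℝ) → ℝ}
    (k : Fin n) (hv : HasCompactSupport v) : HasCompactSupport (confFlux α u v k) :=
  hv.mul_right.mul_right

theorem tsupport_confFlux_subset (α : ℝ) (u v : (Fin n → ℝ) → ℝ) (k : Fin n) :
    tsupport (confFlux α u v k) ⊆ tsupport v :=
  tsupport_mul_subset_left.trans tsupport_mul_subset_left

theorem contDiff_confFlux (α : ℝ) {u v : (Fin n → ℝ) → ℝ} {Ω : Set (Fin n → ℝ)} (k : Fin n)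
    (hΩ : IsOpen Ω) (hΩne : ∀ j, ∀ y ∈ Ω, y j ≠ 0) (hu : ContDiffOn ℝ 2 u Ω)
    (hv : ContDiffOn ℝ 1 v Ω) (hvsubset : tsupport v ⊆ Ω) :
    ContDiff ℝ 1 (confFlux α u v k) :=
  ((hv.mul (contDiffOn_confPDeriv α k hΩ (hΩne k) hu)).mul (contDiffOn_prod fun j _ =>
    (contDiff_apply ℝ ℝ j).contDiffOn.rpow_const_of_ne (hΩne j))).contDiff_of_tsupport_subset hΩ
    ((tsupport_confFlux_subset α u v k).trans hvsubset)

theorem fderiv_confFlux_apply_single (α : ℝ) {u v : (Fin n → ℝ) → ℝ} {x : Fin n → ℝ}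
    (k : Fin n) (hxk : 0 < x k) (hF : DifferentiableAt ℝ (confFlux α u v k) x)
    (hv : DifferentiableAt ℝ v x) (hDu : DifferentiableAt ℝ (confPDeriv α u k) x) :
    fderiv ℝ (confFlux α u v k) x (Pi.single k 1)
      = (confPDeriv α u k x * confPDeriv α v k x + v x * confPDeriv α (confPDeriv α u k) k x) *
        ∏ j, x j ^ (α - 1) := by
  rw [← deriv_comp_update k hF]
  exact deriv_comp_update_mul_mul_prod_erase α k hxk hv hDu

theorem conformable_green_first_identity_general (α : ℝ)
    (n : ℕ) (Ω : Set (Fin n → ℝ)) (hΩ : IsOpen Ω)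
    (hΩpos : Ω ⊆ {x : Fin n → ℝ | ∀ k, 0 < x k})
    (u v : (Fin n → ℝ) → ℝ)
    (hu : ContDiffOn ℝ 2 u Ω) (hv : ContDiffOn ℝ 1 v Ω)
    (hvsupp : HasCompactSupport v) (hvsubset : tsupport v ⊆ Ω) :
    ∫ x in Ω,
      ((∑ k, confPDeriv α u k x * confPDeriv α v k x)
        + v x * ∑ k, confPDeriv α (confPDeriv α u k) k x) * ∏ k, (x k) ^ (α - 1)
      = 0 := by
  have hΩne : ∀ k, ∀ y ∈ Ω, y k ≠ 0 := fun k y hy => (hΩpos hy k).ne'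
  have hF : ∀ k, ContDiff ℝ 1 (confFlux α u v k) := fun k =>
    contDiff_confFlux α k hΩ hΩne hu hv hvsubset
  have hdiv : Set.EqOn (fun x => ((∑ k, confPDeriv α u k x * confPDeriv α v k x)
        + v x * ∑ k, confPDeriv α (confPDeriv α u k) k x) * ∏ k, (x k) ^ (α - 1))
      (fun x => ∑ k, fderiv ℝ (confFlux α u v k) x (Pi.single k 1)) Ω := fun x hx => by
    have hdiff : ∀ {f : (Fin n → ℝ) → ℝ}, ContDiffOn ℝ 1 f Ω → DifferentiableAt ℝ f x := fun h =>
      (h.contDiffAt (hΩ.mem_nhds hx)).differentiableAt one_ne_zero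
    simp only [mul_sum, ← sum_add_distrib, sum_mul]
    exact sum_congr rfl fun k _ => (fderiv_confFlux_apply_single α k (hΩpos hx k)
      ((hF k).differentiable one_ne_zero x) (hdiff hv)
      (hdiff (contDiffOn_confPDeriv α k hΩ (hΩne k) hu))).symm
  have hvanish : ∀ x ∉ Ω, ∑ k, fderiv ℝ (confFlux α u v k) x (Pi.single k 1) = 0 :=
    fun x hx => sum_eq_zero fun k _ => by
      rw [fderiv_of_notMem_tsupport ℝ fun h => hx (hvsubset (tsupport_confFlux_subset α u v k h)),
        zero_apply]
  rw [setIntegral_congr_fun hΩ.measurableSet hdiv,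
    setIntegral_eq_integral_of_forall_compl_eq_zero hvanish, integral_finsetSum _ fun k _ =>
      (hF k).integrable_fderiv_apply volume (hasCompactSupport_confFlux α u k hvsupp) _]
  exact sum_eq_zero fun k _ =>
    integral_fderiv_apply_eq_zero volume (hF k) (hasCompactSupport_confFlux α u k hvsupp) _

/-- Conformable Green's first identity with vanishing boundary term:
`∫_Ω (∑ₖ D^α_{x_k} u · D^α_{x_k} v + v · ∑ₖ D^α_{x_k}(D^α_{x_k} u)) d_α x = 0`,
where `d_α x` has density `∏ₖ x_k^{α-1}` w.r.t. Lebesgue measure. -/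
theorem conformable_green_first_identity (α : ℝ) (hα : α ∈ Set.Ioc (0 : ℝ) 1)
    (n : ℕ) (Ω : Set (Fin n → ℝ)) (hΩ : IsOpen Ω)
    (hΩpos : Ω ⊆ {x : Fin n → ℝ | ∀ k, 0 < x k})
    (u v : (Fin n → ℝ) → ℝ)
    (hu : ContDiffOn ℝ 2 u Ω) (hv : ContDiffOn ℝ 1 v Ω)
    (hvsupp : HasCompactSupport v) (hvsubset : tsupport v ⊆ Ω) :
    ∫ x in Ω,
      ((∑ k, confPDeriv α u k x * confPDeriv α v k x)
        + v x * ∑ k, confPDeriv α (confPDeriv α u k) k x) * ∏ k, (x k) ^ (α - 1)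
      = 0 :=
  conformable_green_first_identity_general α n Ω hΩ hΩpos u v hu hv hvsupp hvsubset
end

section
/- Anisotropic conformable Picone identity (equality of the two forms): let α ∈ (0,1], let Ω ⊆ (0,∞)^n be open, let p_k > 1 for k = 1,…,n, and let u, v : Ω → ℝ be differentiable with u ≥ 0 and v > 0 on Ω. Then R(u,v)(x) = L(u,v)(x) for every x ∈ Ω. -/
/-
Conformable partial derivatives are `x_k ^ (1 - α)` times ordinary partial derivatives, so they
obey the quotient rule: `D(u^p / v^(p-1)) = p (u/v)^(p-1) Du - (p-1) (u/v)^p Dv`. Multiplying by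
`|Dv|^(p-2) Dv` and using `|Dv|^(p-2) Dv Dv = |Dv|^p`, the `k`-th summands of `R` and `L` agree.
-/

open Filter Topology

/-- The first form `R(u,v)` of the anisotropic conformable Picone identity. -/
noncomputable def piconeR (α : ℝ) {n : ℕ} (p : Fin n → ℝ)
    (u v : (Fin n → ℝ) → ℝ) (x : Fin n → ℝ) : ℝ :=
  (∑ k, |confPDeriv α u k x| ^ (p k))
    - ∑ k, confPDeriv α (fun y => u y ^ (p k) / v y ^ (p k - 1)) k x
        * |confPDeriv α v k x| ^ (p k - 2) * confPDeriv α v k x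

/-- The second form `L(u,v)` of the anisotropic conformable Picone identity. -/
noncomputable def piconeL (α : ℝ) {n : ℕ} (p : Fin n → ℝ)
    (u v : (Fin n → ℝ) → ℝ) (x : Fin n → ℝ) : ℝ :=
  (∑ k, |confPDeriv α u k x| ^ (p k))
    + (∑ k, (p k - 1) * (u x / v x) ^ (p k) * |confPDeriv α v k x| ^ (p k))
    - ∑ k, p k * (u x / v x) ^ (p k - 1) * |confPDeriv α v k x| ^ (p k - 2)
        * confPDeriv α u k x * confPDeriv α v k x

open Function

theorem hasDerivAt_update_apply {ι F : Type*} [Fintype ι] [DecidableEq ι]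
    [NormedAddCommGroup F] [NormedSpace ℝ F] {f : (ι → ℝ) → F} {x : ι → ℝ}
    (hf : DifferentiableAt ℝ f x) (k : ι) :
    HasDerivAt (fun t => f (update x k t)) (fderiv ℝ f x (Pi.single k 1)) (x k) := by
  refine HasFDerivAt.comp_hasDerivAt _ ?_ (hasDerivAt_update x k (x k))
  rw [update_eq_self]
  exact hf.hasFDerivAt

theorem HasDerivAt.rpow_div_rpow_sub_one {g h : ℝ → ℝ} {g' h' t q : ℝ}
    (hg : HasDerivAt g g' t) (hh : HasDerivAt h h' t) (hq : 1 ≤ q)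
    (hg0 : 0 ≤ g t) (hh0 : 0 < h t) :
    HasDerivAt (fun s => g s ^ q / h s ^ (q - 1))
      (q * (g t / h t) ^ (q - 1) * g' - (q - 1) * (g t / h t) ^ q * h') t := by
  have hquot := (hg.rpow_const (Or.inr hq)).div (hh.rpow_const (p := q - 1) (Or.inl hh0.ne'))
    (Real.rpow_pos_of_pos hh0 _).ne'
  refine hquot.congr_deriv ?_
  -- Expressing all powers of `h t` through `h t ^ q` leaves an identity of rational functions
  -- in which `g t ^ q` and `g t ^ (q - 1)` are independent atoms: no case split on `g t = 0`.
  rw [Real.div_rpow hg0 hh0.le, Real.div_rpow hg0 hh0.le, Real.rpow_sub_one hh0.ne',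
    show q - 1 - 1 = q - 2 by ring, Real.rpow_sub hh0 q 2, Real.rpow_two]
  field_simp

theorem confPDeriv_eq_fderiv {n : ℕ} {f : (Fin n → ℝ) → ℝ} {x : Fin n → ℝ}
    (hf : DifferentiableAt ℝ f x) (α : ℝ) (k : Fin n) :
    confPDeriv α f k x = x k ^ (1 - α) * fderiv ℝ f x (Pi.single k 1) := by
  rw [confPDeriv, (hasDerivAt_update_apply hf k).deriv]

theorem confPDeriv_rpow_div_rpow_sub_one {n : ℕ} {u v : (Fin n → ℝ) → ℝ} {x : Fin n → ℝ}
    (hu : DifferentiableAt ℝ u x) (hv : DifferentiableAt ℝ v x) {q : ℝ} (hq : 1 ≤ q)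
    (hu0 : 0 ≤ u x) (hv0 : 0 < v x) (α : ℝ) (k : Fin n) :
    confPDeriv α (fun y => u y ^ q / v y ^ (q - 1)) k x
      = q * (u x / v x) ^ (q - 1) * confPDeriv α u k x
        - (q - 1) * (u x / v x) ^ q * confPDeriv α v k x := by
  have hquot := (hasDerivAt_update_apply hu k).rpow_div_rpow_sub_one
    (hasDerivAt_update_apply hv k) hq (by rwa [update_eq_self]) (by rwa [update_eq_self])
  rw [confPDeriv, hquot.deriv, confPDeriv_eq_fderiv hu, confPDeriv_eq_fderiv hv, update_eq_self]
  ring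

theorem abs_rpow_sub_two_mul_self_mul_self {q : ℝ} (hq : q ≠ 0) (a : ℝ) :
    |a| ^ (q - 2) * a * a = |a| ^ q := by
  rw [mul_assoc, ← abs_mul_abs_self, ← sq, ← Real.rpow_two,
    ← Real.rpow_add' (abs_nonneg a) (by simpa using hq), sub_add_cancel]

theorem anisotropic_conformable_picone_eq_general (α : ℝ)
    (n : ℕ) (Ω : Set (Fin n → ℝ)) (hΩ : IsOpen Ω)
    (p : Fin n → ℝ) (hp : ∀ k, 1 < p k)
    (u v : (Fin n → ℝ) → ℝ)
    (hu : DifferentiableOn ℝ u Ω) (hv : DifferentiableOn ℝ v Ω)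
    (hu0 : ∀ x ∈ Ω, 0 ≤ u x) (hv0 : ∀ x ∈ Ω, 0 < v x) :
    ∀ x ∈ Ω, piconeR α p u v x = piconeL α p u v x := by
  intro x hx
  have hud := hu.differentiableAt (hΩ.mem_nhds hx)
  have hvd := hv.differentiableAt (hΩ.mem_nhds hx)
  have hterm : ∀ k, confPDeriv α (fun y => u y ^ p k / v y ^ (p k - 1)) k x
        * |confPDeriv α v k x| ^ (p k - 2) * confPDeriv α v k x
      = p k * (u x / v x) ^ (p k - 1) * |confPDeriv α v k x| ^ (p k - 2)
          * confPDeriv α u k x * confPDeriv α v k x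
        - (p k - 1) * (u x / v x) ^ p k * |confPDeriv α v k x| ^ p k := fun k => by
    rw [confPDeriv_rpow_div_rpow_sub_one hud hvd (hp k).le (hu0 x hx) (hv0 x hx)]
    linear_combination -(p k - 1) * (u x / v x) ^ p k
      * abs_rpow_sub_two_mul_self_mul_self (zero_lt_one.trans (hp k)).ne' (confPDeriv α v k x)
  simp only [piconeR, piconeL, hterm, Finset.sum_sub_distrib]
  ring

/-- Anisotropic conformable Picone identity: `R(u,v) = L(u,v)` on `Ω`. -/
theorem anisotropic_conformable_picone_eq (α : ℝ) (hα : α ∈ Set.Ioc (0 : ℝ) 1)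
    (n : ℕ) (Ω : Set (Fin n → ℝ)) (hΩ : IsOpen Ω)
    (hΩpos : Ω ⊆ {x : Fin n → ℝ | ∀ k, 0 < x k})
    (p : Fin n → ℝ) (hp : ∀ k, 1 < p k)
    (u v : (Fin n → ℝ) → ℝ)
    (hu : DifferentiableOn ℝ u Ω) (hv : DifferentiableOn ℝ v Ω)
    (hu0 : ∀ x ∈ Ω, 0 ≤ u x) (hv0 : ∀ x ∈ Ω, 0 < v x) :
    ∀ x ∈ Ω, piconeR α p u v x = piconeL α p u v x :=
  anisotropic_conformable_picone_eq_general α n Ω hΩ p hp u v hu hv hu0 hv0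
end
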